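/- Let f₀, f₁, f₂ be real constants and f(s) = f₀ s⁵ + f₁ s + f₂. Then for EVERY smooth function u : ℝ × ℝ → ℝ (not necessarily a solution), the pointwise identity D_t T₄ + D_x X₄ = ( u_t + u² u_{xxx} + 4 u u_x u_{xx} + u_x³ + f'(u) u_x ) · ( 2t( u² u_{xx} + u u_x² + f₀ u⁵ ) + (2/5)(f₁ t − x) u ) holds, where T₄ = (1/3) f₀ t u⁶ − t u² u_x² + (1/5)(f₁ t − x) u² and X₄ = 2 f₀ t u⁷ u_{xx} + t u⁴ u_{xx}² + 2t u³ u_x² u_{xx} + (2/5) f₁ t u³ u_{xx} − (2/5) x u³ u_{xx} + (2/5) u³ u_x + t u² u_x⁴ − (1/5) x u² u_x² + 2t u² u_t u_x + 2 f₀ t u⁶ u_x² + (6/5) f₁ t u² u_x² + f₀² t u¹⁰ + (2/3) f₀ f₁ t u⁶ − (1/3) f₀ x u⁶ + (1/5) f₁² t u² − (1/5) f₁ x u². In particular, on any solution of the generalized quasilinear KdV equation with f(u) = f₀ u⁵ + f₁ u + f₂, the conservation law D_t T₄ + D_x X₄ = 0 holds. -/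

import Mathlib

/-- Partial derivative with respect to the first (time) variable. -/
noncomputable def pdt (u : ℝ × ℝ → ℝ) (p : ℝ × ℝ) : ℝ :=
  deriv (fun s => u (s, p.2)) p.1

/-- Partial derivative with respect to the second (space) variable. -/
noncomputable def pdx (u : ℝ × ℝ → ℝ) (p : ℝ × ℝ) : ℝ :=
  deriv (fun s => u (p.1, s)) p.2

/-- Left-hand side of the generalized quasilinear KdV equation
`u_t + u² u_{xxx} + 4 u u_x u_{xx} + u_x³ + f'(u) u_x`. -/
noncomputable def kdvLHS (f : ℝ → ℝ) (u : ℝ × ℝ → ℝ) (p : ℝ × ℝ) : ℝ :=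
  pdt u p + (u p) ^ 2 * pdx (pdx (pdx u)) p + 4 * u p * pdx u p * pdx (pdx u) p
    + (pdx u p) ^ 3 + deriv f (u p) * pdx u p

/-- Conserved density `T₄` for `f(u) = f₀ u⁵ + f₁ u + f₂`. -/
noncomputable def T4 (f₀ f₁ : ℝ) (u : ℝ × ℝ → ℝ) (p : ℝ × ℝ) : ℝ :=
  (1 / 3) * f₀ * p.1 * (u p) ^ 6 - p.1 * (u p) ^ 2 * (pdx u p) ^ 2
    + (1 / 5) * (f₁ * p.1 - p.2) * (u p) ^ 2

/-- Flux `X₄` for `f(u) = f₀ u⁵ + f₁ u + f₂`. -/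
noncomputable def X4 (f₀ f₁ : ℝ) (u : ℝ × ℝ → ℝ) (p : ℝ × ℝ) : ℝ :=
  2 * f₀ * p.1 * (u p) ^ 7 * pdx (pdx u) p
    + p.1 * (u p) ^ 4 * (pdx (pdx u) p) ^ 2
    + 2 * p.1 * (u p) ^ 3 * (pdx u p) ^ 2 * pdx (pdx u) p
    + (2 / 5) * f₁ * p.1 * (u p) ^ 3 * pdx (pdx u) p
    - (2 / 5) * p.2 * (u p) ^ 3 * pdx (pdx u) p
    + (2 / 5) * (u p) ^ 3 * pdx u p
    + p.1 * (u p) ^ 2 * (pdx u p) ^ 4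
    - (1 / 5) * p.2 * (u p) ^ 2 * (pdx u p) ^ 2
    + 2 * p.1 * (u p) ^ 2 * pdt u p * pdx u p
    + 2 * f₀ * p.1 * (u p) ^ 6 * (pdx u p) ^ 2
    + (6 / 5) * f₁ * p.1 * (u p) ^ 2 * (pdx u p) ^ 2
    + f₀ ^ 2 * p.1 * (u p) ^ 10
    + (2 / 3) * f₀ * f₁ * p.1 * (u p) ^ 6
    - (1 / 3) * f₀ * p.2 * (u p) ^ 6
    + (1 / 5) * f₁ ^ 2 * p.1 * (u p) ^ 2
    - (1 / 5) * f₁ * p.2 * (u p) ^ 2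

section helpers
variable {u : ℝ × ℝ → ℝ}

lemma hasDerivAt_sec_x (hu : ContDiff ℝ (⊤ : ℕ∞) u) (p : ℝ × ℝ) :
    HasDerivAt (fun s => u (p.1, s)) (fderiv ℝ u p ((0:ℝ),(1:ℝ))) p.2 := by
  have h1 : HasDerivAt (fun s : ℝ => ((p.1, s) : ℝ × ℝ)) (((0:ℝ),(1:ℝ))) p.2 :=
    (hasDerivAt_const _ _).prodMk (hasDerivAt_id _)
  have h2 := (hu.differentiable (by simp) (p.1, p.2)).hasFDerivAt
  exact h2.comp_hasDerivAt p.2 h1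

lemma hasDerivAt_sec_t (hu : ContDiff ℝ (⊤ : ℕ∞) u) (p : ℝ × ℝ) :
    HasDerivAt (fun s => u (s, p.2)) (fderiv ℝ u p ((1:ℝ),(0:ℝ))) p.1 := by
  have h1 : HasDerivAt (fun s : ℝ => ((s, p.2) : ℝ × ℝ)) (((1:ℝ),(0:ℝ))) p.1 :=
    (hasDerivAt_id _).prodMk (hasDerivAt_const _ _)
  have h2 := (hu.differentiable (by simp) (p.1, p.2)).hasFDerivAt
  exact h2.comp_hasDerivAt p.1 h1

lemma pdx_eq (hu : ContDiff ℝ (⊤ : ℕ∞) u) (p : ℝ × ℝ) :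
    pdx u p = fderiv ℝ u p ((0:ℝ),(1:ℝ)) := (hasDerivAt_sec_x hu p).deriv

lemma pdt_eq (hu : ContDiff ℝ (⊤ : ℕ∞) u) (p : ℝ × ℝ) :
    pdt u p = fderiv ℝ u p ((1:ℝ),(0:ℝ)) := (hasDerivAt_sec_t hu p).deriv

lemma contDiff_pdx (hu : ContDiff ℝ (⊤ : ℕ∞) u) : ContDiff ℝ (⊤ : ℕ∞) (pdx u) := by
  have h : ContDiff ℝ (⊤ : ℕ∞) (fun p => fderiv ℝ u p ((0:ℝ),(1:ℝ))) :=
    (hu.fderiv_right (by simp)).clm_apply contDiff_const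
  have : pdx u = fun p => fderiv ℝ u p ((0:ℝ),(1:ℝ)) := funext (pdx_eq hu)
  rw [this]; exact h

lemma contDiff_pdt (hu : ContDiff ℝ (⊤ : ℕ∞) u) : ContDiff ℝ (⊤ : ℕ∞) (pdt u) := by
  have h : ContDiff ℝ (⊤ : ℕ∞) (fun p => fderiv ℝ u p ((1:ℝ),(0:ℝ))) :=
    (hu.fderiv_right (by simp)).clm_apply contDiff_const
  have : pdt u = fun p => fderiv ℝ u p ((1:ℝ),(0:ℝ)) := funext (pdt_eq hu)
  rw [this]; exact h

lemma fderiv_pd (hu : ContDiff ℝ (⊤ : ℕ∞) u) (p : ℝ × ℝ) (v w : ℝ × ℝ) :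
    fderiv ℝ (fun q => fderiv ℝ u q v) p w = fderiv ℝ (fderiv ℝ u) p w v := by
  have hF : HasFDerivAt (fderiv ℝ u) (fderiv ℝ (fderiv ℝ u) p) p :=
    (((hu.fderiv_right (m := (⊤ : ℕ∞)) (by simp)).differentiable (by simp)) p).hasFDerivAt
  have h2 : HasFDerivAt (fun q => fderiv ℝ u q v)
      ((ContinuousLinearMap.apply ℝ ℝ v).comp (fderiv ℝ (fderiv ℝ u) p)) p :=
    (ContinuousLinearMap.apply ℝ ℝ v).hasFDerivAt.comp p hF
  rw [h2.fderiv]; rfl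

lemma clairaut (hu : ContDiff ℝ (⊤ : ℕ∞) u) (p : ℝ × ℝ) :
    pdt (pdx u) p = pdx (pdt u) p := by
  have hdu : ∀ y, HasFDerivAt u (fderiv ℝ u y) y :=
    fun y => (hu.differentiable (by simp) y).hasFDerivAt
  have hF : HasFDerivAt (fderiv ℝ u) (fderiv ℝ (fderiv ℝ u) p) p :=
    (((hu.fderiv_right (m := (⊤ : ℕ∞)) (by simp)).differentiable (by simp)) p).hasFDerivAt
  have hsym := second_derivative_symmetric hdu hF ((1:ℝ),(0:ℝ)) ((0:ℝ),(1:ℝ))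
  have e1 : pdt (pdx u) p = fderiv ℝ (fderiv ℝ u) p ((1:ℝ),(0:ℝ)) ((0:ℝ),(1:ℝ)) := by
    rw [pdt_eq (contDiff_pdx hu) p]
    have : pdx u = fun q => fderiv ℝ u q ((0:ℝ),(1:ℝ)) := funext (pdx_eq hu)
    rw [this, fderiv_pd hu]
  have e2 : pdx (pdt u) p = fderiv ℝ (fderiv ℝ u) p ((0:ℝ),(1:ℝ)) ((1:ℝ),(0:ℝ)) := by
    rw [pdx_eq (contDiff_pdt hu) p]
    have : pdt u = fun q => fderiv ℝ u q ((1:ℝ),(0:ℝ)) := funext (pdt_eq hu)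
    rw [this, fderiv_pd hu]
  rw [e1, e2, hsym]

lemma hasDerivAt_pdx {v : ℝ × ℝ → ℝ} (hv : ContDiff ℝ (⊤ : ℕ∞) v) (t x : ℝ) :
    HasDerivAt (fun s => v (t, s)) (pdx v (t, x)) x := by
  rw [pdx_eq hv]; exact hasDerivAt_sec_x hv (t, x)

lemma hasDerivAt_pdt {v : ℝ × ℝ → ℝ} (hv : ContDiff ℝ (⊤ : ℕ∞) v) (t x : ℝ) :
    HasDerivAt (fun s => v (s, x)) (pdt v (t, x)) t := by
  rw [pdt_eq hv]; exact hasDerivAt_sec_t hv (t, x)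

end helpers

/-- The multiplier identity `D_t T₄ + D_x X₄ = (kdv LHS) · Q₄` with multiplier
`Q₄ = 2t(u² u_{xx} + u u_x² + f₀ u⁵) + (2/5)(f₁ t − x) u` holds for every smooth
function `u`, when `f(u) = f₀ u⁵ + f₁ u + f₂`; in particular, on solutions the
conservation law `D_t T₄ + D_x X₄ = 0` holds. -/
theorem extra_conservation_law_quintic (f₀ f₁ f₂ : ℝ) (f : ℝ → ℝ)
    (hf : ∀ s : ℝ, f s = f₀ * s ^ 5 + f₁ * s + f₂)
    (u : ℝ × ℝ → ℝ) (hu : ContDiff ℝ (⊤ : ℕ∞) u) :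
    (∀ p : ℝ × ℝ, pdt (T4 f₀ f₁ u) p + pdx (X4 f₀ f₁ u) p
      = kdvLHS f u p *
        (2 * p.1 * ((u p) ^ 2 * pdx (pdx u) p + u p * (pdx u p) ^ 2 + f₀ * (u p) ^ 5)
          + (2 / 5) * (f₁ * p.1 - p.2) * u p)) ∧
      ((∀ p : ℝ × ℝ, kdvLHS f u p = 0) →
        ∀ p : ℝ × ℝ, pdt (T4 f₀ f₁ u) p + pdx (X4 f₀ f₁ u) p = 0) := by
  have hf' : ∀ s : ℝ, deriv f s = 5 * f₀ * s ^ 4 + f₁ := by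
    intro s
    rw [funext hf]
    rw [show deriv (fun x => f₀ * x ^ 5 + f₁ * x + f₂) s = _ from ((((hasDerivAt_pow 5 s).const_mul f₀).add
      ((hasDerivAt_id' (x := s)).const_mul f₁)).add_const f₂).deriv]
    norm_num; ring
  have main : ∀ p : ℝ × ℝ, pdt (T4 f₀ f₁ u) p + pdx (X4 f₀ f₁ u) p
      = kdvLHS f u p *
        (2 * p.1 * ((u p) ^ 2 * pdx (pdx u) p + u p * (pdx u p) ^ 2 + f₀ * (u p) ^ 5)
          + (2 / 5) * (f₁ * p.1 - p.2) * u p) := by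
    rintro ⟨t, x⟩
    -- t-direction section derivatives
    have h1 : HasDerivAt (fun s => u (s, x)) (pdt u (t, x)) t := hasDerivAt_pdt hu t x
    have h2 : HasDerivAt (fun s => pdx u (s, x)) (pdx (pdt u) (t, x)) t := by
      rw [← clairaut hu (t, x)]; exact hasDerivAt_pdt (contDiff_pdx hu) t x
    -- x-direction section derivatives
    have g1 : HasDerivAt (fun s => u (t, s)) (pdx u (t, x)) x := hasDerivAt_pdx hu t x
    have g2 : HasDerivAt (fun s => pdx u (t, s)) (pdx (pdx u) (t, x)) x :=
      hasDerivAt_pdx (contDiff_pdx hu) t x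
    have g3 : HasDerivAt (fun s => pdx (pdx u) (t, s)) (pdx (pdx (pdx u)) (t, x)) x :=
      hasDerivAt_pdx (contDiff_pdx (contDiff_pdx hu)) t x
    have g4 : HasDerivAt (fun s => pdt u (t, s)) (pdx (pdt u) (t, x)) x :=
      hasDerivAt_pdx (contDiff_pdt hu) t x
    have hT :=
      ((((hasDerivAt_id t).const_mul ((1/3) * f₀)).mul (h1.pow 6)).sub
        (((hasDerivAt_id t).mul (h1.pow 2)).mul (h2.pow 2))).add
        (((((hasDerivAt_id t).const_mul f₁).sub_const x).const_mul (1/5)).mul (h1.pow 2))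
    have hX :=
      (((((((((((((((((g1.pow 7).const_mul (2 * f₀ * t)).mul g3).add
        (((g1.pow 4).const_mul t).mul (g3.pow 2))).add
        ((((g1.pow 3).const_mul (2 * t)).mul (g2.pow 2)).mul g3)).add
        (((g1.pow 3).const_mul ((2/5) * f₁ * t)).mul g3)).sub
        ((((hasDerivAt_id x).const_mul (2/5)).mul (g1.pow 3)).mul g3)).add
        (((g1.pow 3).const_mul (2/5)).mul g2)).add
        (((g1.pow 2).const_mul t).mul (g2.pow 4))).sub
        ((((hasDerivAt_id x).const_mul (1/5)).mul (g1.pow 2)).mul (g2.pow 2))).add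
        ((((g1.pow 2).const_mul (2 * t)).mul g4).mul g2)).add
        (((g1.pow 6).const_mul (2 * f₀ * t)).mul (g2.pow 2))).add
        (((g1.pow 2).const_mul ((6/5) * f₁ * t)).mul (g2.pow 2))).add
        ((g1.pow 10).const_mul (f₀ ^ 2 * t))).add
        ((g1.pow 6).const_mul ((2/3) * f₀ * f₁ * t))).sub
        (((hasDerivAt_id x).const_mul ((1/3) * f₀)).mul (g1.pow 6))).add
        ((g1.pow 2).const_mul ((1/5) * f₁ ^ 2 * t))).sub
        (((hasDerivAt_id x).const_mul ((1/5) * f₁)).mul (g1.pow 2))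
    have e1 : pdt (T4 f₀ f₁ u) (t, x) = _ := hT.deriv
    have e2 : pdx (X4 f₀ f₁ u) (t, x) = _ := hX.deriv
    rw [e1, e2]
    simp only [kdvLHS, hf', id_eq, Pi.pow_apply, Pi.mul_apply, Pi.add_apply, Pi.sub_apply, id]
    push_cast
    ring
  exact ⟨main, fun h p => by rw [main p, h p, zero_mul]⟩
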